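/- Let Γ be a pre-automatic structure over a finite alphabet A that is an automatic cross-section, with interpretation σ : A⁺ → S. Then for any word w ∈ A⁺, the element σ(w) is right cancellable in S (i.e., xσ(w) = yσ(w) implies x = y for all x, y ∈ S) if and only if L_w ∘ L_w⁻¹ is the diagonal relation { (u, u) : u ∈ L } on L. -/

import Mathlib

universe u v

/-- A pre-automatic structure over an alphabet `A`: a language `L` of nonempty words
(elements of the free semigroup `A⁺`), a relation `L₌ ⊆ L × L`, and for each letter
`a ∈ A` a relation `Lₐ ⊆ L × L`. -/
structure PreAutomaticStructure (A : Type u) where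
  L : Set (FreeSemigroup A)
  Leq : Set (FreeSemigroup A × FreeSemigroup A)
  Lletter : A → Set (FreeSemigroup A × FreeSemigroup A)
  Leq_sub : Leq ⊆ L ×ˢ L
  Lletter_sub : ∀ a, Lletter a ⊆ L ×ˢ L

/-- An interpretation of a pre-automatic structure with respect to a semigroup `S`:
a semigroup homomorphism `σ : A⁺ → S` such that (i) `σ(L) = S`, (ii) `L₌` captures
equality of representatives, (iii) `Lₐ` captures right multiplication by `a`. -/
structure IsInterpretation {A : Type u} {S : Type v} [Semigroup S]
    (Γ : PreAutomaticStructure A) (σ : FreeSemigroup A →ₙ* S) : Prop where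
  surj : ⇑σ '' Γ.L = Set.univ
  eq_iff : ∀ u ∈ Γ.L, ∀ v ∈ Γ.L, ((u, v) ∈ Γ.Leq ↔ σ u = σ v)
  step_iff : ∀ (a : A), ∀ u ∈ Γ.L, ∀ v ∈ Γ.L,
    ((u, v) ∈ Γ.Lletter a ↔ σ (u * FreeSemigroup.of a) = σ v)

/-- `σ` is consistent with the assignment of generators `ι : A → L`. -/
def ConsistentWith {A : Type u} {S : Type v} [Semigroup S] (Γ : PreAutomaticStructure A)
    (σ : FreeSemigroup A →ₙ* S) (ι : A → FreeSemigroup A) : Prop :=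
  (∀ a, ι a ∈ Γ.L) ∧ ∀ a, σ (ι a) = σ (FreeSemigroup.of a)

/-- `ι : A → L` is an assignment of generators: some interpretation is consistent with it. -/
def IsAssignment {A : Type u} (Γ : PreAutomaticStructure A)
    (ι : A → FreeSemigroup A) : Prop :=
  ∃ (T : Type v) (inst : Semigroup T)
    (τ : @MulHom (FreeSemigroup A) T _ inst.toMul),
    @IsInterpretation A T inst Γ τ ∧ @ConsistentWith A T inst Γ τ ι

/-- Composition of relations: `(u, v) ∈ R ∘ R'` iff `∃ x, (u, x) ∈ R ∧ (x, v) ∈ R'`. -/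
def relComp {W : Type*} (R R' : Set (W × W)) : Set (W × W) :=
  {p | ∃ x, (p.1, x) ∈ R ∧ (x, p.2) ∈ R'}

/-- The inverse of a relation. -/
def relInv {W : Type*} (R : Set (W × W)) : Set (W × W) := {p | (p.2, p.1) ∈ R}

/-- `L_w` for a word `w` given as a list of letters: `L_ε = L₌` and
`L_{a₁⋯aₙ} = L_{a₁} ∘ ⋯ ∘ L_{aₙ}`. -/
def PreAutomaticStructure.LwordList {A : Type u} (Γ : PreAutomaticStructure A) :
    List A → Set (FreeSemigroup A × FreeSemigroup A)
  | [] => Γ.Leq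
  | [a] => Γ.Lletter a
  | a :: b :: rest => relComp (Γ.Lletter a) (Γ.LwordList (b :: rest))

/-- `L_w` for a nonempty word `w ∈ A⁺`. -/
def PreAutomaticStructure.Lword {A : Type u} (Γ : PreAutomaticStructure A)
    (w : FreeSemigroup A) : Set (FreeSemigroup A × FreeSemigroup A) :=
  Γ.LwordList (w.head :: w.tail)

/-! By induction on the letters of `w`, and using that every element of `S` has a
representative in `L`, `(u, v) ∈ L_w` holds exactly when `σ(u w) = σ(v)`. Hence `L_w ∘ L_w⁻¹`
relates `u, v ∈ L` iff `σ(u)σ(w) = σ(v)σ(w)`; since `σ` is a bijection `L → S`, this relation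
is the diagonal exactly when `σ(w)` is right cancellable. -/

namespace PreAutomaticStructure

variable {A : Type u} (Γ : PreAutomaticStructure A)

theorem LwordList_cons_subset (a : A) (l : List A) :
    Γ.LwordList (a :: l) ⊆ Γ.L ×ˢ Γ.L := by
  induction l generalizing a with
  | nil => exact Γ.Lletter_sub a
  | cons b rest ih =>
    rintro ⟨u, v⟩ ⟨x, hux, hxv⟩
    exact ⟨(Γ.Lletter_sub a hux).1, (ih b hxv).2⟩

theorem Lword_subset (w : FreeSemigroup A) : Γ.Lword w ⊆ Γ.L ×ˢ Γ.L :=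
  Γ.LwordList_cons_subset w.head w.tail

end PreAutomaticStructure

namespace IsInterpretation

variable {A : Type u} {S : Type v} [Semigroup S] {Γ : PreAutomaticStructure A}
  {σ : FreeSemigroup A →ₙ* S}

theorem exists_mem_L (hσ : IsInterpretation Γ σ) (s : S) : ∃ u ∈ Γ.L, σ u = s :=
  show s ∈ σ '' Γ.L from hσ.surj ▸ Set.mem_univ s

theorem mem_LwordList_cons_iff (hσ : IsInterpretation Γ σ) (a : A) (l : List A)
    {u v : FreeSemigroup A} (hu : u ∈ Γ.L) (hv : v ∈ Γ.L) :
    (u, v) ∈ Γ.LwordList (a :: l) ↔ σ (u * ⟨a, l⟩) = σ v := by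
  induction l generalizing a u with
  | nil => exact hσ.step_iff a u hu v hv
  | cons b rest ih =>
    rw [show (⟨a, b :: rest⟩ : FreeSemigroup A) = .of a * ⟨b, rest⟩ from rfl, ← mul_assoc,
      map_mul]
    constructor
    · rintro ⟨x, hux, hxv⟩
      have hx : x ∈ Γ.L := (Γ.Lletter_sub a hux).2
      rw [(hσ.step_iff a u hu x hx).1 hux, ← map_mul]
      exact (ih b hx).1 hxv
    · intro h
      obtain ⟨x, hx, hxa⟩ := hσ.exists_mem_L (σ (u * .of a))
      refine ⟨x, (hσ.step_iff a u hu x hx).2 hxa.symm, (ih b hx).2 ?_⟩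
      rwa [map_mul, hxa]

theorem mem_Lword_iff (hσ : IsInterpretation Γ σ) (w : FreeSemigroup A)
    {u v : FreeSemigroup A} (hu : u ∈ Γ.L) (hv : v ∈ Γ.L) :
    (u, v) ∈ Γ.Lword w ↔ σ (u * w) = σ v :=
  hσ.mem_LwordList_cons_iff w.head w.tail hu hv

theorem mem_relComp_Lword_relInv_iff (hσ : IsInterpretation Γ σ) (w : FreeSemigroup A)
    (u v : FreeSemigroup A) :
    (u, v) ∈ relComp (Γ.Lword w) (relInv (Γ.Lword w)) ↔
      u ∈ Γ.L ∧ v ∈ Γ.L ∧ σ u * σ w = σ v * σ w := by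
  constructor
  · rintro ⟨x, hux, hvx⟩
    have hvx : (v, x) ∈ Γ.Lword w := hvx
    obtain ⟨hu, hx⟩ := Γ.Lword_subset w hux
    have hv : v ∈ Γ.L := (Γ.Lword_subset w hvx).1
    refine ⟨hu, hv, ?_⟩
    rw [← map_mul, ← map_mul, (hσ.mem_Lword_iff w hu hx).1 hux,
      (hσ.mem_Lword_iff w hv hx).1 hvx]
  · rintro ⟨hu, hv, huv⟩
    obtain ⟨x, hx, hxu⟩ := hσ.exists_mem_L (σ (u * w))
    refine ⟨x, (hσ.mem_Lword_iff w hu hx).2 hxu.symm, (hσ.mem_Lword_iff w hv hx).2 ?_⟩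
    rw [hxu, map_mul, map_mul, huv]

end IsInterpretation

theorem stmt_6_general {A : Type*} {S : Type*} [Semigroup S]
    (Γ : PreAutomaticStructure A) (σ : FreeSemigroup A →ₙ* S)
    (hσ : IsInterpretation Γ σ) (hcs : Set.BijOn (⇑σ) Γ.L Set.univ)
    (w : FreeSemigroup A) :
    (∀ x y : S, x * σ w = y * σ w → x = y) ↔
      relComp (Γ.Lword w) (relInv (Γ.Lword w)) =
        {p : FreeSemigroup A × FreeSemigroup A | p.1 ∈ Γ.L ∧ p.2 = p.1} := by
  constructor
  · intro hcancel
    ext ⟨u, v⟩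
    rw [hσ.mem_relComp_Lword_relInv_iff]
    constructor
    · rintro ⟨hu, hv, huv⟩
      exact ⟨hu, hcs.injOn hv hu (hcancel _ _ huv).symm⟩
    · rintro ⟨hu, rfl : v = u⟩
      exact ⟨hu, hu, rfl⟩
  · intro hdiag x y hxy
    obtain ⟨u, hu, rfl⟩ := hσ.exists_mem_L x
    obtain ⟨v, hv, rfl⟩ := hσ.exists_mem_L y
    have huv := (hσ.mem_relComp_Lword_relInv_iff w u v).2 ⟨hu, hv, hxy⟩
    rw [hdiag] at huv
    exact congrArg σ huv.2.symm

/-- For an automatic cross-section: `σ(w)` is right cancellable iff `L_w ∘ L_w⁻¹` is the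
diagonal relation on `L`. -/
theorem stmt_6 {A : Type*} [Finite A] {S : Type*} [Semigroup S]
    (Γ : PreAutomaticStructure A) (σ : FreeSemigroup A →ₙ* S)
    (hσ : IsInterpretation Γ σ) (hcs : Set.BijOn (⇑σ) Γ.L Set.univ)
    (w : FreeSemigroup A) :
    (∀ x y : S, x * σ w = y * σ w → x = y) ↔
      relComp (Γ.Lword w) (relInv (Γ.Lword w)) =
        {p : FreeSemigroup A × FreeSemigroup A | p.1 ∈ Γ.L ∧ p.2 = p.1} :=
  stmt_6_general Γ σ hσ hcs w
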